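/- arXiv:2310.05309 — 7 statements merged into one kernel-verified Lean document; each statement's English description precedes it below -/
import Mathlib

section
/- Fix c ∈ ℝ^d and λ > 0, and define g(w) = E_{x∼φ(·;w)}[c·x] + λ H(w), where H(w) = E_{x∼φ(·;w)}[log φ(x;w)]. Then for every w ∈ ℝ^d, ∇g(w)·(c + λw) = Var_{x∼φ(·;w)}[(c + λw)·x]. -/
open Finset
open scoped InnerProductSpace BigOperators

noncomputable section

/-- The Gibbs distribution on a finite set `X ⊆ ℝ^d` with parameter `w`:
`φ(x; w) = exp(w·x) / ∑_{y ∈ X} exp(w·y)`. -/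
def gibbs {d : ℕ} (X : Finset (EuclideanSpace ℝ (Fin d)))
    (w x : EuclideanSpace ℝ (Fin d)) : ℝ :=
  Real.exp ⟪w, x⟫_ℝ / ∑ y ∈ X, Real.exp ⟪w, y⟫_ℝ

/-- Expectation of a real function under the Gibbs distribution. -/
def gibbsExp {d : ℕ} (X : Finset (EuclideanSpace ℝ (Fin d)))
    (w : EuclideanSpace ℝ (Fin d)) (f : EuclideanSpace ℝ (Fin d) → ℝ) : ℝ :=
  ∑ x ∈ X, gibbs X w x * f x

/-- Variance of a real function under the Gibbs distribution. -/
def gibbsVar {d : ℕ} (X : Finset (EuclideanSpace ℝ (Fin d)))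
    (w : EuclideanSpace ℝ (Fin d)) (f : EuclideanSpace ℝ (Fin d) → ℝ) : ℝ :=
  gibbsExp X w (fun x => f x ^ 2) - (gibbsExp X w f) ^ 2

/-- Mean (a vector) of the Gibbs distribution. -/
def gibbsMean {d : ℕ} (X : Finset (EuclideanSpace ℝ (Fin d)))
    (w : EuclideanSpace ℝ (Fin d)) : EuclideanSpace ℝ (Fin d) :=
  ∑ x ∈ X, gibbs X w x • x

/-- The negative entropy `H(w) = E_{x ∼ φ(·;w)}[log φ(x;w)]`. -/
def negEnt {d : ℕ} (X : Finset (EuclideanSpace ℝ (Fin d)))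
    (w : EuclideanSpace ℝ (Fin d)) : ℝ :=
  ∑ x ∈ X, gibbs X w x * Real.log (gibbs X w x)

/-! Differentiating `φ(x;u) = exp(u·x - log Z(u))` gives `∂_v φ(x;u) = φ(x;u) (v·x - v·μ(u))` with
`μ` the Gibbs mean, because `∇ log Z = μ`. Hence the derivative of `u ↦ E_u[f]` in direction `v` is
the covariance `Cov_u(f, v·x)`. For the entropy, `log φ(x;w) = w·x - log Z(w)` differs from `w·x`
by a constant, which has zero covariance, so `∂_v g(w) = Cov_w((c + λw)·x, v·x)`; at `v = c + λw`
this is the variance.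
-/

def gibbsPartition {d : ℕ} (X : Finset (EuclideanSpace ℝ (Fin d)))
    (w : EuclideanSpace ℝ (Fin d)) : ℝ :=
  ∑ y ∈ X, Real.exp ⟪w, y⟫_ℝ

/-- The derivative `v ↦ Cov_{φ(·;w)}(f, x ↦ v·x)` of `u ↦ E_{x∼φ(·;u)}[f(x)]` at `w`. -/
def gibbsExpDeriv {d : ℕ} (X : Finset (EuclideanSpace ℝ (Fin d)))
    (w : EuclideanSpace ℝ (Fin d)) (f : EuclideanSpace ℝ (Fin d) → ℝ) :
    EuclideanSpace ℝ (Fin d) →L[ℝ] ℝ :=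
  ∑ x ∈ X, (gibbs X w x * f x) • innerSL ℝ (x - gibbsMean X w)

section Gibbs

variable {d : ℕ} {X : Finset (EuclideanSpace ℝ (Fin d))}

theorem hasFDerivAt_inner_const (x w : EuclideanSpace ℝ (Fin d)) :
    HasFDerivAt (fun u : EuclideanSpace ℝ (Fin d) => ⟪u, x⟫_ℝ) (innerSL ℝ x) w := by
  have h : (fun u => ⟪u, x⟫_ℝ) = innerSL ℝ x := by
    funext u
    rw [innerSL_apply_apply, real_inner_comm]
  exact h ▸ (innerSL ℝ x).hasFDerivAt

theorem gibbs_eq_exp_div_gibbsPartition (w x : EuclideanSpace ℝ (Fin d)) :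
    gibbs X w x = Real.exp ⟪w, x⟫_ℝ / gibbsPartition X w :=
  rfl

theorem gibbsPartition_pos (hX : X.Nonempty) (w : EuclideanSpace ℝ (Fin d)) :
    0 < gibbsPartition X w :=
  Finset.sum_pos (fun _ _ => Real.exp_pos _) hX

theorem gibbs_pos (hX : X.Nonempty) (w x : EuclideanSpace ℝ (Fin d)) : 0 < gibbs X w x :=
  div_pos (Real.exp_pos _) (gibbsPartition_pos hX w)

theorem sum_gibbs (hX : X.Nonempty) (w : EuclideanSpace ℝ (Fin d)) :
    ∑ x ∈ X, gibbs X w x = 1 := by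
  simp_rw [gibbs_eq_exp_div_gibbsPartition, ← Finset.sum_div]
  exact div_self (gibbsPartition_pos hX w).ne'

theorem gibbsExp_inner_right (w v : EuclideanSpace ℝ (Fin d)) :
    gibbsExp X w (fun x => ⟪x, v⟫_ℝ) = ⟪gibbsMean X w, v⟫_ℝ := by
  simp only [gibbsExp, gibbsMean, sum_inner, real_inner_smul_left]

theorem gibbs_eq_exp (hX : X.Nonempty) (w x : EuclideanSpace ℝ (Fin d)) :
    gibbs X w x = Real.exp (⟪w, x⟫_ℝ - Real.log (gibbsPartition X w)) := by
  rw [Real.exp_sub, Real.exp_log (gibbsPartition_pos hX w), gibbs_eq_exp_div_gibbsPartition]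

theorem log_gibbs (hX : X.Nonempty) (w x : EuclideanSpace ℝ (Fin d)) :
    Real.log (gibbs X w x) = ⟪w, x⟫_ℝ - Real.log (gibbsPartition X w) := by
  rw [gibbs_eq_exp hX, Real.log_exp]

theorem hasFDerivAt_log_gibbsPartition (hX : X.Nonempty) (w : EuclideanSpace ℝ (Fin d)) :
    HasFDerivAt (fun u => Real.log (gibbsPartition X u)) (innerSL ℝ (gibbsMean X w)) w := by
  have hZ : HasFDerivAt (gibbsPartition X)
      (∑ y ∈ X, Real.exp ⟪w, y⟫_ℝ • innerSL ℝ y) w :=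
    HasFDerivAt.fun_sum fun y _ => (hasFDerivAt_inner_const y w).exp
  refine (hZ.log (gibbsPartition_pos hX w).ne').congr_fderiv ?_
  simp only [gibbsMean, gibbs_eq_exp_div_gibbsPartition, map_sum, map_smul, Finset.smul_sum,
    smul_smul, div_eq_inv_mul]

theorem hasFDerivAt_gibbs (hX : X.Nonempty) (w x : EuclideanSpace ℝ (Fin d)) :
    HasFDerivAt (fun u => gibbs X u x) (gibbs X w x • innerSL ℝ (x - gibbsMean X w)) w := by
  have hexp : (fun u => gibbs X u x)
      = fun u => Real.exp (⟪u, x⟫_ℝ - Real.log (gibbsPartition X u)) :=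
    funext fun u => gibbs_eq_exp hX u x
  rw [hexp, map_sub, gibbs_eq_exp hX]
  exact ((hasFDerivAt_inner_const x w).sub (hasFDerivAt_log_gibbsPartition hX w)).exp

theorem gibbsExpDeriv_apply (w : EuclideanSpace ℝ (Fin d)) (f : EuclideanSpace ℝ (Fin d) → ℝ)
    (v : EuclideanSpace ℝ (Fin d)) :
    gibbsExpDeriv X w f v = ∑ x ∈ X, gibbs X w x * f x * ⟪x - gibbsMean X w, v⟫_ℝ := by
  simp only [gibbsExpDeriv, _root_.sum_apply, smul_apply, innerSL_apply_apply, smul_eq_mul]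

theorem sum_gibbs_mul_inner_sub_gibbsMean (hX : X.Nonempty) (w v : EuclideanSpace ℝ (Fin d)) :
    ∑ x ∈ X, gibbs X w x * ⟪x - gibbsMean X w, v⟫_ℝ = 0 := by
  simp only [inner_sub_left, mul_sub, Finset.sum_sub_distrib, ← Finset.sum_mul, sum_gibbs hX]
  rw [← gibbsExp_inner_right, gibbsExp]
  ring

theorem hasFDerivAt_gibbsExp (hX : X.Nonempty) (w : EuclideanSpace ℝ (Fin d))
    (f : EuclideanSpace ℝ (Fin d) → ℝ) :
    HasFDerivAt (fun u => gibbsExp X u f) (gibbsExpDeriv X w f) w := by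
  refine (HasFDerivAt.fun_sum fun x _ => (hasFDerivAt_gibbs hX w x).mul_const (f x)).congr_fderiv ?_
  simp only [gibbsExpDeriv, smul_smul, mul_comm]

theorem hasFDerivAt_negEnt (hX : X.Nonempty) (w : EuclideanSpace ℝ (Fin d)) :
    HasFDerivAt (negEnt X) (gibbsExpDeriv X w (fun x => ⟪w, x⟫_ℝ)) w := by
  refine (HasFDerivAt.fun_sum fun x _ => (hasFDerivAt_gibbs hX w x).mul
    ((hasFDerivAt_gibbs hX w x).log (gibbs_pos hX w x).ne')).congr_fderiv ?_
  ext v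
  simp only [_root_.sum_apply, add_apply, smul_apply, innerSL_apply_apply, smul_eq_mul,
    gibbsExpDeriv_apply, log_gibbs hX]
  have hterm : ∀ x ∈ X, gibbs X w x * ((gibbs X w x)⁻¹ * (gibbs X w x * ⟪x - gibbsMean X w, v⟫_ℝ))
      + (⟪w, x⟫_ℝ - Real.log (gibbsPartition X w)) * (gibbs X w x * ⟪x - gibbsMean X w, v⟫_ℝ)
      = gibbs X w x * ⟪w, x⟫_ℝ * ⟪x - gibbsMean X w, v⟫_ℝ
        + (1 - Real.log (gibbsPartition X w)) * (gibbs X w x * ⟪x - gibbsMean X w, v⟫_ℝ) := by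
    intro x _
    rw [mul_inv_cancel_left₀ (gibbs_pos hX w x).ne']
    ring
  rw [Finset.sum_congr rfl hterm, Finset.sum_add_distrib, ← Finset.mul_sum,
    sum_gibbs_mul_inner_sub_gibbsMean hX, mul_zero, add_zero]

theorem gibbsExpDeriv_add_smul (w : EuclideanSpace ℝ (Fin d))
    (f g : EuclideanSpace ℝ (Fin d) → ℝ) (a : ℝ) :
    gibbsExpDeriv X w f + a • gibbsExpDeriv X w g = gibbsExpDeriv X w (fun x => f x + a * g x) := by
  ext v
  simp only [add_apply, smul_apply, smul_eq_mul, gibbsExpDeriv_apply, Finset.mul_sum, ← Finset.sum_add_distrib]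
  exact Finset.sum_congr rfl fun x _ => by ring

theorem gibbsExpDeriv_inner_apply_self (w a : EuclideanSpace ℝ (Fin d)) :
    gibbsExpDeriv X w (fun x => ⟪a, x⟫_ℝ) a = gibbsVar X w (fun x => ⟪a, x⟫_ℝ) := by
  have hmean : gibbsExp X w (fun x => ⟪a, x⟫_ℝ) = ⟪gibbsMean X w, a⟫_ℝ := by
    rw [← gibbsExp_inner_right]
    exact congrArg _ (funext fun x => real_inner_comm x a)
  have hmean_sq : ⟪gibbsMean X w, a⟫_ℝ ^ 2
      = ∑ x ∈ X, gibbs X w x * ⟪a, x⟫_ℝ * ⟪gibbsMean X w, a⟫_ℝ := by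
    rw [← Finset.sum_mul, ← gibbsExp, hmean, sq]
  rw [gibbsVar, hmean, hmean_sq, gibbsExpDeriv_apply, gibbsExp, ← Finset.sum_sub_distrib]
  refine Finset.sum_congr rfl fun x _ => ?_
  rw [inner_sub_left, real_inner_comm a x]
  ring

end Gibbs

theorem gradient_entropy_regularized_correlation_general {d : ℕ}
    (X : Finset (EuclideanSpace ℝ (Fin d))) (hX : X.Nonempty)
    (c : EuclideanSpace ℝ (Fin d)) (lam : ℝ) :
    ∀ w : EuclideanSpace ℝ (Fin d),
      ⟪gradient (fun w => gibbsExp X w (fun x => ⟪c, x⟫_ℝ) + lam * negEnt X w) w,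
          c + lam • w⟫_ℝ
        = gibbsVar X w (fun x => ⟪c + lam • w, x⟫_ℝ) := by
  intro w
  have hg : HasFDerivAt (fun w => gibbsExp X w (fun x => ⟪c, x⟫_ℝ) + lam * negEnt X w)
      (gibbsExpDeriv X w (fun x => ⟪c + lam • w, x⟫_ℝ)) w := by
    simp_rw [inner_add_left, real_inner_smul_left, ← gibbsExpDeriv_add_smul]
    exact (hasFDerivAt_gibbsExp hX w _).add ((hasFDerivAt_negEnt hX w).const_mul lam)
  rw [hg.hasGradientAt.gradient, InnerProductSpace.toDual_symm_apply,
    gibbsExpDeriv_inner_apply_self]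

/-- For `g(w) = E_{x∼φ(·;w)}[c·x] + λ H(w)`, for every `w`,
`∇g(w)·(c + λw) = Var_{x∼φ(·;w)}[(c + λw)·x]`. -/
theorem gradient_entropy_regularized_correlation {d : ℕ} (hd : 1 ≤ d)
    (X : Finset (EuclideanSpace ℝ (Fin d))) (hX : X.Nonempty)
    (D : ℝ) (hD : ∀ x ∈ X, ‖x‖ ≤ D)
    (c : EuclideanSpace ℝ (Fin d)) (lam : ℝ) (hlam : 0 < lam) :
    ∀ w : EuclideanSpace ℝ (Fin d),
      ⟪gradient (fun w => gibbsExp X w (fun x => ⟪c, x⟫_ℝ) + lam * negEnt X w) w,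
          c + lam • w⟫_ℝ
        = gibbsVar X w (fun x => ⟪c + lam • w, x⟫_ℝ) :=
  gradient_entropy_regularized_correlation_general X hX c lam

end
end

section
/- For every w ∈ ℝ^d and every ρ ≥ 0, the mean of the Gibbs distribution with tilted parameter ρw is close to the uniform mean: ‖E_{x∼φ(·;ρw)}[x] − E_{x∼U(X)}[x]‖₂ ≤ 2ρ‖w‖₂D². -/
/-!
Along the ray `t ↦ t • w` the Gibbs mean moves with velocity equal to the covariance, under
`φ(·; t • w)`, of the energy `⟪w, x⟫` and the position `x`. Both are bounded on `X` (by `‖w‖ D`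
and `D`), so that covariance has norm at most `2 ‖w‖ D²`, and the mean value inequality on
`[0, ρ]` gives the bound, `t = 0` being the uniform distribution.
-/

open Finset
open scoped InnerProductSpace BigOperators

noncomputable section

/-- Mean (a vector) of the uniform distribution on `X`. -/
def unifMean {d : ℕ} (X : Finset (EuclideanSpace ℝ (Fin d))) : EuclideanSpace ℝ (Fin d) :=
  (X.card : ℝ)⁻¹ • ∑ x ∈ X, x

/-- Expectation of a real function under the uniform distribution on `X`. -/
def unifExp {d : ℕ} (X : Finset (EuclideanSpace ℝ (Fin d)))
    (f : EuclideanSpace ℝ (Fin d) → ℝ) : ℝ :=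
  (X.card : ℝ)⁻¹ * ∑ x ∈ X, f x

/-- Variance of a real function under the uniform distribution on `X`. -/
def unifVar {d : ℕ} (X : Finset (EuclideanSpace ℝ (Fin d)))
    (f : EuclideanSpace ℝ (Fin d) → ℝ) : ℝ :=
  unifExp X (fun x => f x ^ 2) - (unifExp X f) ^ 2

open Real

section TiltedAvg

variable {α E : Type*} [NormedAddCommGroup E] [NormedSpace ℝ E] (s : Finset α) (a : α → ℝ)

def tiltedAvg (c : α → E) (t : ℝ) : E :=
  (∑ x ∈ s, exp (t * a x))⁻¹ • ∑ x ∈ s, exp (t * a x) • c x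

variable {s}

lemma sum_exp_mul_pos (hs : s.Nonempty) (t : ℝ) : 0 < ∑ x ∈ s, exp (t * a x) :=
  sum_pos (fun _ _ => exp_pos _) hs

lemma norm_tiltedAvg_le (hs : s.Nonempty) {c : α → E} {C : ℝ} (hc : ∀ x ∈ s, ‖c x‖ ≤ C)
    (t : ℝ) : ‖tiltedAvg s a c t‖ ≤ C := by
  have hZ := sum_exp_mul_pos a hs t
  have hN : ‖∑ x ∈ s, exp (t * a x) • c x‖ ≤ C * ∑ x ∈ s, exp (t * a x) :=
    calc ‖∑ x ∈ s, exp (t * a x) • c x‖ ≤ ∑ x ∈ s, exp (t * a x) * ‖c x‖ := by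
          refine (norm_sum_le _ _).trans_eq (sum_congr rfl fun x _ => ?_)
          rw [norm_smul, norm_of_nonneg (exp_pos _).le]
      _ ≤ ∑ x ∈ s, exp (t * a x) * C :=
          sum_le_sum fun x hx => mul_le_mul_of_nonneg_left (hc x hx) (exp_pos _).le
      _ = C * ∑ x ∈ s, exp (t * a x) := by rw [← sum_mul, mul_comm]
  rw [tiltedAvg, norm_smul, norm_inv, norm_of_nonneg hZ.le, inv_mul_le_iff₀ hZ, mul_comm]
  exact hN

lemma hasDerivAt_tiltedAvg (hs : s.Nonempty) (c : α → E) (t : ℝ) :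
    HasDerivAt (tiltedAvg s a c)
      (tiltedAvg s a (fun x => a x • c x) t - tiltedAvg s a a t • tiltedAvg s a c t) t := by
  have hZ : HasDerivAt (fun t => ∑ x ∈ s, exp (t * a x)) (∑ x ∈ s, exp (t * a x) * a x) t :=
    HasDerivAt.fun_sum fun x _ => by simpa using ((hasDerivAt_id t).mul_const (a x)).exp
  have hN : HasDerivAt (fun t => ∑ x ∈ s, exp (t * a x) • c x)
      (∑ x ∈ s, (exp (t * a x) * a x) • c x) t :=
    HasDerivAt.fun_sum fun x _ => by
      simpa using ((hasDerivAt_id t).mul_const (a x)).exp.smul_const (c x)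
  refine ((hZ.inv (sum_exp_mul_pos a hs t).ne').smul hN).congr_deriv ?_
  simp only [tiltedAvg, smul_smul, smul_eq_mul, Pi.inv_apply]
  module

lemma norm_tiltedAvg_smul_sub_smul_le (hs : s.Nonempty) {c : α → E} {A C : ℝ}
    (ha : ∀ x ∈ s, |a x| ≤ A) (hc : ∀ x ∈ s, ‖c x‖ ≤ C) (t : ℝ) :
    ‖tiltedAvg s a (fun x => a x • c x) t - tiltedAvg s a a t • tiltedAvg s a c t‖ ≤
      2 * A * C := by
  obtain ⟨x₀, hx₀⟩ := hs
  have hA : 0 ≤ A := (abs_nonneg _).trans (ha x₀ hx₀)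
  have hac : ∀ x ∈ s, ‖a x • c x‖ ≤ A * C := fun x hx => by
    rw [norm_smul, norm_eq_abs]
    exact mul_le_mul (ha x hx) (hc x hx) (norm_nonneg _) hA
  calc _ ≤ ‖tiltedAvg s a (fun x => a x • c x) t‖ + ‖tiltedAvg s a a t‖ * ‖tiltedAvg s a c t‖ :=
        (norm_sub_le _ _).trans_eq (by rw [norm_smul])
    _ ≤ A * C + A * C := by
        gcongr
        · exact norm_tiltedAvg_le a ⟨x₀, hx₀⟩ hac t
        · exact norm_tiltedAvg_le a ⟨x₀, hx₀⟩ (fun x hx => (norm_eq_abs _).trans_le (ha x hx)) t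
        · exact norm_tiltedAvg_le a ⟨x₀, hx₀⟩ hc t
    _ = 2 * A * C := by ring

lemma norm_tiltedAvg_sub_le (hs : s.Nonempty) {c : α → E} {A C : ℝ}
    (ha : ∀ x ∈ s, |a x| ≤ A) (hc : ∀ x ∈ s, ‖c x‖ ≤ C) {ρ : ℝ} (hρ : 0 ≤ ρ) :
    ‖tiltedAvg s a c ρ - tiltedAvg s a c 0‖ ≤ 2 * A * C * ρ := by
  simpa using norm_image_sub_le_of_norm_deriv_le_segment'
    (fun t _ => (hasDerivAt_tiltedAvg a hs c t).hasDerivWithinAt)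
    (fun t _ => norm_tiltedAvg_smul_sub_smul_le a hs ha hc t) ρ ⟨hρ, le_rfl⟩

end TiltedAvg

lemma gibbsMean_smul_eq_tiltedAvg {d : ℕ} (X : Finset (EuclideanSpace ℝ (Fin d)))
    (w : EuclideanSpace ℝ (Fin d)) (t : ℝ) :
    gibbsMean X (t • w) = tiltedAvg X (fun x => ⟪w, x⟫_ℝ) id t := by
  simp only [gibbsMean, gibbs, tiltedAvg, real_inner_smul_left, smul_sum, smul_smul, id,
    div_eq_inv_mul]

lemma unifMean_eq_tiltedAvg_zero {d : ℕ} (X : Finset (EuclideanSpace ℝ (Fin d)))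
    (a : EuclideanSpace ℝ (Fin d) → ℝ) : unifMean X = tiltedAvg X a id 0 := by
  simp [unifMean, tiltedAvg]

theorem gibbs_tilted_mean_close_to_uniform_general {d : ℕ}
    (X : Finset (EuclideanSpace ℝ (Fin d))) (hX : X.Nonempty)
    (D : ℝ) (hD : ∀ x ∈ X, ‖x‖ ≤ D) :
    ∀ (w : EuclideanSpace ℝ (Fin d)) (ρ : ℝ), 0 ≤ ρ →
      ‖gibbsMean X (ρ • w) - unifMean X‖ ≤ 2 * ρ * ‖w‖ * D ^ 2 := by
  intro w ρ hρ
  have henergy : ∀ x ∈ X, |⟪w, x⟫_ℝ| ≤ ‖w‖ * D := fun x hx =>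
    (abs_real_inner_le_norm w x).trans (mul_le_mul_of_nonneg_left (hD x hx) (norm_nonneg w))
  rw [gibbsMean_smul_eq_tiltedAvg, unifMean_eq_tiltedAvg_zero X]
  calc _ ≤ 2 * (‖w‖ * D) * D * ρ := norm_tiltedAvg_sub_le _ hX henergy hD hρ
    _ = 2 * ρ * ‖w‖ * D ^ 2 := by ring

/-- For every `w` and every `ρ ≥ 0`, the mean of the Gibbs distribution with
tilted parameter `ρw` is close to the uniform mean:
`‖E_{x∼φ(·;ρw)}[x] − E_{x∼U(X)}[x]‖₂ ≤ 2ρ‖w‖₂D²`. -/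
theorem gibbs_tilted_mean_close_to_uniform {d : ℕ} (hd : 1 ≤ d)
    (X : Finset (EuclideanSpace ℝ (Fin d))) (hX : X.Nonempty)
    (D : ℝ) (hD : ∀ x ∈ X, ‖x‖ ≤ D) :
    ∀ (w : EuclideanSpace ℝ (Fin d)) (ρ : ℝ), 0 ≤ ρ →
      ‖gibbsMean X (ρ • w) - unifMean X‖ ≤ 2 * ρ * ‖w‖ * D ^ 2 :=
  gibbs_tilted_mean_close_to_uniform_general X hX D hD

end
end

section
/- For every w, v ∈ ℝ^d and every ρ ≥ 0, the second moment of v·x under the Gibbs distribution with tilted parameter ρw is close to the uniform second moment: |E_{x∼φ(·;ρw)}[(v·x)²] − E_{x∼U(X)}[(v·x)²]| ≤ 2ρ‖w‖₂D³‖v‖₂². -/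
open Finset
open scoped InnerProductSpace BigOperators

noncomputable section

/-!
Writing `Z = ∑ exp(a y)` and `n = #X`, the deviation of the softmax weight from the uniform one is
`exp(a x) / Z - 1 / n = ∑ y, (exp(a x) - exp(a y)) / (n Z)`, and
`|exp s - exp t| ≤ |s - t| (exp s + exp t)`. Hence if `a` oscillates by at most `K` on `X`, the
softmax weights are within `2K` of uniform in `ℓ¹`. For `a x = ⟪ρ w, x⟫` the oscillation is at most
`2 ρ ‖w‖ D`, and since both distributions have total mass one, expectations of a function with
values in `[0, M]` differ by at most `M / 2` times that `ℓ¹` distance. Here `M = ‖v‖² D²`.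
-/

theorem abs_exp_sub_exp_le (s t : ℝ) :
    |Real.exp s - Real.exp t| ≤ |s - t| * (Real.exp s + Real.exp t) := by
  wlog hts : t ≤ s generalizing s t
  · rw [abs_sub_comm, abs_sub_comm s, add_comm]
    exact this t s (le_of_not_ge hts)
  have hexp : (t - s) * Real.exp s + Real.exp s ≤ Real.exp t := by
    have := mul_le_mul_of_nonneg_right (Real.add_one_le_exp (t - s)) (Real.exp_pos s).le
    rwa [← Real.exp_add, sub_add_cancel, add_mul, one_mul] at this
  rw [abs_of_nonneg (sub_nonneg.2 (Real.exp_le_exp.2 hts)), abs_of_nonneg (sub_nonneg.2 hts)]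
  nlinarith [Real.exp_pos t]

theorem abs_sum_mul_sub_sum_mul_le {α : Type*} {X : Finset α} {p q f : α → ℝ} {c r : ℝ}
    (hpq : ∑ x ∈ X, p x = ∑ x ∈ X, q x) (hf : ∀ x ∈ X, |f x - c| ≤ r) :
    |∑ x ∈ X, p x * f x - ∑ x ∈ X, q x * f x| ≤ r * ∑ x ∈ X, |p x - q x| := by
  have hcentre : ∑ x ∈ X, p x * f x - ∑ x ∈ X, q x * f x
      = ∑ x ∈ X, (p x - q x) * (f x - c) := by
    simp only [mul_sub, sub_mul, sum_sub_distrib, ← sum_mul, hpq, sub_self, sub_zero]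
  rw [hcentre, mul_sum]
  refine (abs_sum_le_sum_abs _ _).trans (sum_le_sum fun x hx => ?_)
  rw [abs_mul, mul_comm r]
  exact mul_le_mul_of_nonneg_left (hf x hx) (abs_nonneg _)

theorem sum_abs_exp_div_sum_exp_sub_inv_card_le {α : Type*} {X : Finset α} (hX : X.Nonempty)
    {a : α → ℝ} {K : ℝ} (ha : ∀ x ∈ X, ∀ y ∈ X, |a x - a y| ≤ K) :
    ∑ x ∈ X, |Real.exp (a x) / ∑ y ∈ X, Real.exp (a y) - (#X : ℝ)⁻¹| ≤ 2 * K := by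
  set Z := ∑ y ∈ X, Real.exp (a y)
  set n : ℝ := (#X : ℝ)
  have hZ : 0 < Z := sum_pos (fun y _ => Real.exp_pos _) hX
  have hn : 0 < n := by simp [n, hX.card_pos]
  have hpoint : ∀ x ∈ X, |Real.exp (a x) / Z - n⁻¹|
      ≤ (n * Z)⁻¹ * ∑ y ∈ X, K * (Real.exp (a x) + Real.exp (a y)) := by
    intro x hx
    have hdev : Real.exp (a x) / Z - n⁻¹
        = (n * Z)⁻¹ * ∑ y ∈ X, (Real.exp (a x) - Real.exp (a y)) := by
      rw [sum_sub_distrib, sum_const, nsmul_eq_mul]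
      field_simp
      rfl
    rw [hdev, abs_mul, abs_of_pos (by positivity)]
    gcongr
    refine (abs_sum_le_sum_abs _ _).trans (sum_le_sum fun y hy => ?_)
    exact (abs_exp_sub_exp_le _ _).trans (by gcongr; exact ha x hx y hy)
  calc _ ≤ ∑ x ∈ X, (n * Z)⁻¹ * ∑ y ∈ X, K * (Real.exp (a x) + Real.exp (a y)) :=
        sum_le_sum hpoint
    _ = 2 * K := by
      simp only [← mul_sum, sum_add_distrib, sum_const, nsmul_eq_mul]
      field_simp
      ring

section Gibbs

variable {d : ℕ} {X : Finset (EuclideanSpace ℝ (Fin d))}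

theorem sum_abs_gibbs_sub_inv_card_le (hX : X.Nonempty) {D : ℝ} (hD : ∀ x ∈ X, ‖x‖ ≤ D)
    (w : EuclideanSpace ℝ (Fin d)) :
    ∑ x ∈ X, |gibbs X w x - (#X : ℝ)⁻¹| ≤ 4 * ‖w‖ * D := by
  have hosc : ∀ x ∈ X, ∀ y ∈ X, |⟪w, x⟫_ℝ - ⟪w, y⟫_ℝ| ≤ 2 * ‖w‖ * D := by
    intro x hx y hy
    calc |⟪w, x⟫_ℝ - ⟪w, y⟫_ℝ| = |⟪w, x - y⟫_ℝ| := by rw [inner_sub_right]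
      _ ≤ ‖w‖ * ‖x - y‖ := abs_real_inner_le_norm w _
      _ ≤ ‖w‖ * (D + D) := by gcongr; exact (norm_sub_le x y).trans (add_le_add (hD x hx) (hD y hy))
      _ = 2 * ‖w‖ * D := by ring
  exact (sum_abs_exp_div_sum_exp_sub_inv_card_le hX hosc).trans_eq (by ring)

theorem abs_gibbsExp_sub_unifExp_le (hX : X.Nonempty) {D : ℝ} (hD : ∀ x ∈ X, ‖x‖ ≤ D)
    (w : EuclideanSpace ℝ (Fin d)) {f : EuclideanSpace ℝ (Fin d) → ℝ} {c r : ℝ}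
    (hf : ∀ x ∈ X, |f x - c| ≤ r) :
    |gibbsExp X w f - unifExp X f| ≤ 4 * r * ‖w‖ * D := by
  have hr : 0 ≤ r := (abs_nonneg _).trans (hf _ hX.choose_spec)
  have hmass : ∑ x ∈ X, gibbs X w x = ∑ _x ∈ X, (#X : ℝ)⁻¹ := by
    rw [sum_gibbs hX w, sum_const, nsmul_eq_mul, mul_inv_cancel₀ (by simp [hX.ne_empty])]
  rw [gibbsExp, unifExp, mul_sum]
  calc _ ≤ r * ∑ x ∈ X, |gibbs X w x - (#X : ℝ)⁻¹| := abs_sum_mul_sub_sum_mul_le hmass hf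
    _ ≤ r * (4 * ‖w‖ * D) := by gcongr; exact sum_abs_gibbs_sub_inv_card_le hX hD w
    _ = 4 * r * ‖w‖ * D := by ring

end Gibbs

theorem gibbs_tilted_second_moment_close_to_uniform_general {d : ℕ}
    (X : Finset (EuclideanSpace ℝ (Fin d))) (hX : X.Nonempty)
    (D : ℝ) (hD : ∀ x ∈ X, ‖x‖ ≤ D) :
    ∀ (w v : EuclideanSpace ℝ (Fin d)) (ρ : ℝ), 0 ≤ ρ →
      |gibbsExp X (ρ • w) (fun x => ⟪v, x⟫_ℝ ^ 2) - unifExp X (fun x => ⟪v, x⟫_ℝ ^ 2)|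
        ≤ 2 * ρ * ‖w‖ * D ^ 3 * ‖v‖ ^ 2 := by
  intro w v ρ hρ
  have hD0 : 0 ≤ D := (norm_nonneg _).trans (hD _ hX.choose_spec)
  set M := ‖v‖ ^ 2 * D ^ 2
  have hsq : ∀ x ∈ X, |⟪v, x⟫_ℝ ^ 2 - M / 2| ≤ M / 2 := by
    intro x hx
    have hinner : |⟪v, x⟫_ℝ| ≤ ‖v‖ * D :=
      (abs_real_inner_le_norm v x).trans (by gcongr; exact hD x hx)
    have hle : ⟪v, x⟫_ℝ ^ 2 ≤ M := by
      simpa only [sq_abs, mul_pow] using pow_le_pow_left₀ (abs_nonneg _) hinner 2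
    exact abs_sub_le_iff.2 ⟨by linarith, by nlinarith [sq_nonneg ⟪v, x⟫_ℝ]⟩
  calc _ ≤ 4 * (M / 2) * ‖ρ • w‖ * D := abs_gibbsExp_sub_unifExp_le hX hD (ρ • w) hsq
    _ = 2 * ρ * ‖w‖ * D ^ 3 * ‖v‖ ^ 2 := by
      rw [norm_smul, Real.norm_of_nonneg hρ]; ring

/-- For every `w, v` and every `ρ ≥ 0`, the second moment of `v·x` under the
Gibbs distribution with tilted parameter `ρw` is close to the uniform second moment:
`|E_{x∼φ(·;ρw)}[(v·x)²] − E_{x∼U(X)}[(v·x)²]| ≤ 2ρ‖w‖₂D³‖v‖₂²`. -/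
theorem gibbs_tilted_second_moment_close_to_uniform {d : ℕ} (hd : 1 ≤ d)
    (X : Finset (EuclideanSpace ℝ (Fin d))) (hX : X.Nonempty)
    (D : ℝ) (hD : ∀ x ∈ X, ‖x‖ ≤ D) :
    ∀ (w v : EuclideanSpace ℝ (Fin d)) (ρ : ℝ), 0 ≤ ρ →
      |gibbsExp X (ρ • w) (fun x => ⟪v, x⟫_ℝ ^ 2) - unifExp X (fun x => ⟪v, x⟫_ℝ ^ 2)|
        ≤ 2 * ρ * ‖w‖ * D ^ 3 * ‖v‖ ^ 2 :=
  gibbs_tilted_second_moment_close_to_uniform_general X hX D hD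

end
end

section
/- Let c, w ∈ ℝ^d with ‖w‖₂ ≤ B for some B > 0, and suppose Var_{x∼U(X)}[c·x] ≥ α‖c‖₂² for some α > 0. Then for every ρ satisfying 0 < ρ ≤ min{1/(2BD), α/(12BD³)}, the Gibbs distribution with parameter ρw satisfies Var_{x∼φ(·;ρw)}[c·x] ≥ (α/2)‖c‖₂². -/
open Finset
open scoped InnerProductSpace BigOperators

noncomputable section

/-!
Both variances are halves of the pairwise sum `∑ₓ ∑ᵧ p(x) p(y) (c·x − c·y)²`. Since
`|ρw·x| ≤ ρBD =: t` on `X`, every Gibbs weight is at least `e^{-2t}` times the uniform weight,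
so `Var_{φ(·;ρw)} ≥ e^{-4t} Var_{U(X)}`. The hypothesis on the uniform variance forces `α ≤ D²`
(when `c ≠ 0`), hence `t ≤ 1/12` and `e^{-4t} ≥ 1 - 4t ≥ 1/2`.
-/

section WeightedVariance

variable {β : Type*} (X : Finset β)

def weightedVariance (p f : β → ℝ) : ℝ :=
  ∑ x ∈ X, p x * f x ^ 2 - (∑ x ∈ X, p x * f x) ^ 2

variable {X}

theorem weightedVariance_eq_half_sum_sum {p : β → ℝ} (f : β → ℝ) (hp : ∑ x ∈ X, p x = 1) :
    weightedVariance X p f = 1 / 2 * ∑ x ∈ X, ∑ y ∈ X, p x * p y * (f x - f y) ^ 2 := by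
  have hexpand : ∀ x ∈ X, ∑ y ∈ X, p x * p y * (f x - f y) ^ 2 =
      p x * f x ^ 2 * ∑ y ∈ X, p y + p x * ∑ y ∈ X, p y * f y ^ 2
        - 2 * (p x * f x) * ∑ y ∈ X, p y * f y := by
    intro x _
    simp only [Finset.mul_sum, ← Finset.sum_add_distrib, ← Finset.sum_sub_distrib]
    exact Finset.sum_congr rfl fun y _ => by ring
  rw [weightedVariance, Finset.sum_congr rfl hexpand, Finset.sum_sub_distrib,
    Finset.sum_add_distrib, ← Finset.sum_mul, ← Finset.sum_mul, ← Finset.sum_mul,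
    ← Finset.mul_sum, hp]
  ring

theorem sq_mul_weightedVariance_le_of_mul_le {p q : β → ℝ} {l : ℝ} (f : β → ℝ) (hl : 0 ≤ l)
    (hq₀ : ∀ x ∈ X, 0 ≤ q x) (hqp : ∀ x ∈ X, l * q x ≤ p x)
    (hp : ∑ x ∈ X, p x = 1) (hq : ∑ x ∈ X, q x = 1) :
    l ^ 2 * weightedVariance X q f ≤ weightedVariance X p f := by
  rw [weightedVariance_eq_half_sum_sum f hp, weightedVariance_eq_half_sum_sum f hq,
    mul_left_comm, Finset.mul_sum]
  gcongr 1 / 2 * ?_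
  refine Finset.sum_le_sum fun x hx => ?_
  rw [Finset.mul_sum]
  refine Finset.sum_le_sum fun y hy => ?_
  calc l ^ 2 * (q x * q y * (f x - f y) ^ 2)
      = (l * q x) * (l * q y) * (f x - f y) ^ 2 := by ring
    _ ≤ p x * p y * (f x - f y) ^ 2 := by
      have hx₀ := mul_nonneg hl (hq₀ x hx)
      have hy₀ := mul_nonneg hl (hq₀ y hy)
      gcongr
      exacts [hx₀.trans (hqp x hx), hqp x hx, hqp y hy]

end WeightedVariance

section Gibbs

variable {d : ℕ} {X : Finset (EuclideanSpace ℝ (Fin d))}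

theorem gibbsVar_eq_weightedVariance (w : EuclideanSpace ℝ (Fin d))
    (f : EuclideanSpace ℝ (Fin d) → ℝ) :
    gibbsVar X w f = weightedVariance X (gibbs X w) f :=
  rfl

theorem unifVar_eq_weightedVariance (f : EuclideanSpace ℝ (Fin d) → ℝ) :
    unifVar X f = weightedVariance X (fun _ => (X.card : ℝ)⁻¹) f := by
  simp only [unifVar, unifExp, weightedVariance, Finset.mul_sum]

theorem unifVar_le_of_sq_le (hX : X.Nonempty) {f : EuclideanSpace ℝ (Fin d) → ℝ} {M : ℝ}
    (hM : ∀ x ∈ X, f x ^ 2 ≤ M) :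
    unifVar X f ≤ M := by
  have hcard : (0 : ℝ) < X.card := by exact_mod_cast hX.card_pos
  calc unifVar X f ≤ unifExp X (fun x => f x ^ 2) := by
        rw [unifVar]; linarith [sq_nonneg (unifExp X f)]
    _ ≤ (X.card : ℝ)⁻¹ * (X.card * M) := by
        rw [unifExp, ← nsmul_eq_mul, ← Finset.sum_const]
        gcongr with x hx
        exact hM x hx
    _ = M := by field_simp

theorem exp_neg_two_mul_mul_inv_card_le_gibbs {w : EuclideanSpace ℝ (Fin d)} {t : ℝ}
    (ht : ∀ y ∈ X, |⟪w, y⟫_ℝ| ≤ t) {x : EuclideanSpace ℝ (Fin d)} (hx : x ∈ X) :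
    Real.exp (-(2 * t)) * (X.card : ℝ)⁻¹ ≤ gibbs X w x := by
  have hcard : (0 : ℝ) < X.card := by exact_mod_cast Finset.card_pos.mpr ⟨x, hx⟩
  have hZ : ∑ y ∈ X, Real.exp ⟪w, y⟫_ℝ ≤ X.card * Real.exp t := by
    rw [← nsmul_eq_mul, ← Finset.sum_const]
    gcongr with y hy
    exact (le_abs_self _).trans (ht y hy)
  have hnum : Real.exp (-t) ≤ Real.exp ⟪w, x⟫_ℝ :=
    Real.exp_le_exp.mpr (neg_le_of_abs_le (ht x hx))
  calc Real.exp (-(2 * t)) * (X.card : ℝ)⁻¹ = Real.exp (-t) / (X.card * Real.exp t) := by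
        rw [show -(2 * t) = -t + -t by ring, Real.exp_add, Real.exp_neg t]
        field_simp
    _ ≤ gibbs X w x := by
        unfold gibbs
        gcongr
        exact Finset.sum_pos (fun _ _ => Real.exp_pos _) ⟨x, hx⟩

theorem exp_neg_four_mul_unifVar_le_gibbsVar (hX : X.Nonempty) {w : EuclideanSpace ℝ (Fin d)}
    {t : ℝ} (ht : ∀ y ∈ X, |⟪w, y⟫_ℝ| ≤ t) (f : EuclideanSpace ℝ (Fin d) → ℝ) :
    Real.exp (-(4 * t)) * unifVar X f ≤ gibbsVar X w f := by
  have hcard : (X.card : ℝ) ≠ 0 := by exact_mod_cast hX.card_pos.ne'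
  rw [show -(4 * t) = -(2 * t) + -(2 * t) by ring, Real.exp_add, ← sq,
    unifVar_eq_weightedVariance, gibbsVar_eq_weightedVariance]
  refine sq_mul_weightedVariance_le_of_mul_le f (Real.exp_pos _).le (fun _ _ => by positivity)
    (fun x hx => exp_neg_two_mul_mul_inv_card_le_gibbs ht hx) (sum_gibbs hX w) ?_
  rw [Finset.sum_const, nsmul_eq_mul, mul_inv_cancel₀ hcard]

end Gibbs

theorem gibbs_variance_lower_bound_high_temperature_general {d : ℕ}
    (X : Finset (EuclideanSpace ℝ (Fin d))) (hX : X.Nonempty)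
    (D : ℝ) (hDpos : 0 < D) (hD : ∀ x ∈ X, ‖x‖ ≤ D)
    (c w : EuclideanSpace ℝ (Fin d)) (B : ℝ) (hB : 0 < B) (hw : ‖w‖ ≤ B)
    (α : ℝ) (hα : 0 < α)
    (hvar : unifVar X (fun x => ⟪c, x⟫_ℝ) ≥ α * ‖c‖ ^ 2) :
    ∀ ρ : ℝ, 0 < ρ → ρ ≤ min (1 / (2 * B * D)) (α / (12 * B * D ^ 3)) →
      gibbsVar X (ρ • w) (fun x => ⟪c, x⟫_ℝ) ≥ (α / 2) * ‖c‖ ^ 2 := by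
  intro ρ hρ hρle
  rcases eq_or_ne c 0 with rfl | hc
  · simp [gibbsVar, gibbsExp]
  have hc₂ : 0 < ‖c‖ ^ 2 := by positivity
  have hinner_c : ∀ x ∈ X, ⟪c, x⟫_ℝ ^ 2 ≤ D ^ 2 * ‖c‖ ^ 2 := fun x hx => by
    rw [← mul_pow, ← sq_abs]
    gcongr
    exact (abs_real_inner_le_norm c x).trans (by rw [mul_comm]; gcongr; exact hD x hx)
  have hαD : α ≤ D ^ 2 :=
    le_of_mul_le_mul_right (hvar.trans (unifVar_le_of_sq_le hX hinner_c)) hc₂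
  have ht : ρ * B * D ≤ 1 / 12 := by
    have := (le_div_iff₀ (by positivity)).mp (hρle.trans (min_le_right _ _))
    have hD₂ : 0 < D ^ 2 := by positivity
    nlinarith
  have hinner_w : ∀ x ∈ X, |⟪ρ • w, x⟫_ℝ| ≤ ρ * B * D := fun x hx => by
    refine (abs_real_inner_le_norm _ x).trans ?_
    rw [norm_smul, Real.norm_of_nonneg hρ.le]
    gcongr
    exact hD x hx
  have hexp : 1 / 2 ≤ Real.exp (-(4 * (ρ * B * D))) := by
    linarith [Real.add_one_le_exp (-(4 * (ρ * B * D)))]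
  calc α / 2 * ‖c‖ ^ 2 ≤ Real.exp (-(4 * (ρ * B * D))) * (α * ‖c‖ ^ 2) := by
        rw [div_mul_eq_mul_div, div_eq_mul_one_div, mul_comm]
        gcongr
    _ ≤ Real.exp (-(4 * (ρ * B * D))) * unifVar X (fun x => ⟪c, x⟫_ℝ) := by gcongr
    _ ≤ gibbsVar X (ρ • w) (fun x => ⟪c, x⟫_ℝ) :=
        exp_neg_four_mul_unifVar_le_gibbsVar hX hinner_w _

/-- If `‖w‖₂ ≤ B` and `Var_{x∼U(X)}[c·x] ≥ α‖c‖₂²`, then for every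
`0 < ρ ≤ min{1/(2BD), α/(12BD³)}` we have `Var_{x∼φ(·;ρw)}[c·x] ≥ (α/2)‖c‖₂²`. -/
theorem gibbs_variance_lower_bound_high_temperature {d : ℕ} (hd : 1 ≤ d)
    (X : Finset (EuclideanSpace ℝ (Fin d))) (hX : X.Nonempty)
    (D : ℝ) (hDpos : 0 < D) (hD : ∀ x ∈ X, ‖x‖ ≤ D)
    (c w : EuclideanSpace ℝ (Fin d)) (B : ℝ) (hB : 0 < B) (hw : ‖w‖ ≤ B)
    (α : ℝ) (hα : 0 < α)
    (hvar : unifVar X (fun x => ⟪c, x⟫_ℝ) ≥ α * ‖c‖ ^ 2) :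
    ∀ ρ : ℝ, 0 < ρ → ρ ≤ min (1 / (2 * B * D)) (α / (12 * B * D ^ 3)) →
      gibbsVar X (ρ • w) (fun x => ⟪c, x⟫_ℝ) ≥ (α / 2) * ‖c‖ ^ 2 :=
  gibbs_variance_lower_bound_high_temperature_general X hX D hDpos hD c w B hB hw α hα hvar

end
end

section
/- Let n ≥ 2 and let W be a real n×n matrix such that every row sum and every column sum of W is zero, i.e., ∑_i W_{ij} = 0 for all j and ∑_j W_{ij} = 0 for all i. Then the variance of σ ↦ ∑_{i=1}^n W_{i,σ(i)} over a uniformly random permutation σ of {1,…,n} equals ‖W‖_F²/(n−1); equivalently, since the mean is zero, (1/n!)·∑_{σ∈S_n} (∑_{i=1}^n W_{i,σ(i)})² = ‖W‖_F²/(n−1). -/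
open Finset
open scoped BigOperators

lemma exists_perm_two {n : ℕ} {j l j' l' : Fin n} (hjl : j ≠ l) (hjl' : j' ≠ l') :
    ∃ π : Equiv.Perm (Fin n), π j = j' ∧ π l = l' := by
  refine ⟨(Equiv.swap (Equiv.swap j j' l) l') * (Equiv.swap j j'), ?_, ?_⟩
  · simp only [Equiv.Perm.mul_apply, Equiv.swap_apply_left]
    apply Equiv.swap_apply_of_ne_of_ne
    · intro h
      have := congrArg (Equiv.swap j j') h.symm
      simp at this
      exact hjl this.symm
    · exact hjl'
  · simp only [Equiv.Perm.mul_apply, Equiv.swap_apply_left]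

lemma card_fiber_pair {n : ℕ} (i k : Fin n) {j l j' l' : Fin n} (hjl : j ≠ l) (hjl' : j' ≠ l') :
    (univ.filter fun σ : Equiv.Perm (Fin n) => σ i = j ∧ σ k = l).card
      = (univ.filter fun σ : Equiv.Perm (Fin n) => σ i = j' ∧ σ k = l').card := by
  obtain ⟨π, hπ1, hπ2⟩ := exists_perm_two hjl hjl'
  apply Finset.card_bij' (fun σ _ => π * σ) (fun σ _ => π⁻¹ * σ)
  · intro σ hσ
    simp only [mem_filter, mem_univ, true_and] at hσ ⊢
    simp [Equiv.Perm.mul_apply, hσ.1, hσ.2, hπ1, hπ2]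
  · intro σ hσ
    simp only [mem_filter, mem_univ, true_and] at hσ ⊢
    constructor
    · simp [Equiv.Perm.mul_apply, hσ.1, ← hπ1]
    · simp [Equiv.Perm.mul_apply, hσ.2, ← hπ2]
  · intro σ _; simp [mul_assoc, ← Equiv.Perm.mul_apply]
  · intro σ _; group

lemma card_fiber_single {n : ℕ} (i : Fin n) (j j' : Fin n) :
    (univ.filter fun σ : Equiv.Perm (Fin n) => σ i = j).card
      = (univ.filter fun σ : Equiv.Perm (Fin n) => σ i = j').card := by
  apply Finset.card_bij' (fun σ _ => Equiv.swap j j' * σ) (fun σ _ => Equiv.swap j j' * σ)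
  · intro σ hσ
    simp only [mem_filter, mem_univ, true_and] at hσ ⊢
    simp [Equiv.Perm.mul_apply, hσ]
  · intro σ hσ
    simp only [mem_filter, mem_univ, true_and] at hσ ⊢
    simp [Equiv.Perm.mul_apply, hσ]
  · intro σ _; simp [← mul_assoc]
  · intro σ _; simp [← mul_assoc]

lemma sum_perm_single {n : ℕ} (i : Fin n) (f : Fin n → ℝ) :
    (n : ℝ) * ∑ σ : Equiv.Perm (Fin n), f (σ i)
      = (n.factorial : ℝ) * ∑ j, f j := by
  set c : ℕ := (univ.filter fun σ : Equiv.Perm (Fin n) => σ i = i).card with hc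
  have hfib : ∀ j : Fin n, (univ.filter fun σ : Equiv.Perm (Fin n) => σ i = j).card = c :=
    fun j => card_fiber_single i j i
  have hsum : ∑ σ : Equiv.Perm (Fin n), f (σ i) = (c : ℝ) * ∑ j, f j := by
    rw [← Finset.sum_fiberwise_of_maps_to (g := fun σ : Equiv.Perm (Fin n) => σ i)
        (fun σ _ => mem_univ _) (fun σ => f (σ i)), Finset.mul_sum]
    refine Finset.sum_congr rfl fun j _ => ?_
    rw [Finset.sum_congr rfl (fun σ hσ => ?_), Finset.sum_const, nsmul_eq_mul, hfib]
    simp only [mem_filter] at hσ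
    rw [hσ.2]
  have hcount : c * n = n.factorial := by
    have := Finset.card_eq_sum_card_fiberwise
      (f := fun σ : Equiv.Perm (Fin n) => σ i) (s := univ) (t := univ) (fun σ _ => mem_univ _)
    simp only [hfib, Finset.sum_const, smul_eq_mul, Finset.card_univ, Fintype.card_perm,
      Fintype.card_fin] at this
    simpa [Nat.mul_comm] using this.symm
  rw [hsum, ← hcount]
  push_cast
  ring

lemma sum_perm_pair {n : ℕ} {i k : Fin n} (hik : i ≠ k) (f : Fin n → Fin n → ℝ) :
    ((n : ℝ) * n - n) * ∑ σ : Equiv.Perm (Fin n), f (σ i) (σ k)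
      = (n.factorial : ℝ) * ∑ p ∈ (univ : Finset (Fin n)).offDiag, f p.1 p.2 := by
  have hmaps : ∀ σ : Equiv.Perm (Fin n), σ ∈ (univ : Finset (Equiv.Perm (Fin n))) →
      ((σ i, σ k) : Fin n × Fin n) ∈ (univ : Finset (Fin n)).offDiag := by
    intro σ _
    simp [Finset.mem_offDiag, σ.injective.ne hik]
  have hne : ∀ p ∈ (univ : Finset (Fin n)).offDiag, (p.1 : Fin n) ≠ p.2 := by
    intro p hp; exact (Finset.mem_offDiag.mp hp).2.2
  -- pick a base point: i ≠ k itself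
  set c : ℕ := (univ.filter fun σ : Equiv.Perm (Fin n) => σ i = i ∧ σ k = k).card with hc
  have hfib : ∀ p ∈ (univ : Finset (Fin n)).offDiag,
      (univ.filter fun σ : Equiv.Perm (Fin n) => (σ i, σ k) = p).card = c := by
    intro p hp
    have : (univ.filter fun σ : Equiv.Perm (Fin n) => (σ i, σ k) = p)
        = (univ.filter fun σ : Equiv.Perm (Fin n) => σ i = p.1 ∧ σ k = p.2) := by
      apply Finset.filter_congr; intro σ _; constructor
      · intro h; exact ⟨congrArg Prod.fst h, congrArg Prod.snd h⟩
      · intro h; exact Prod.ext h.1 h.2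
    rw [this]
    exact card_fiber_pair i k (hne p hp) hik
  have hsum : ∑ σ : Equiv.Perm (Fin n), f (σ i) (σ k)
      = (c : ℝ) * ∑ p ∈ (univ : Finset (Fin n)).offDiag, f p.1 p.2 := by
    rw [← Finset.sum_fiberwise_of_maps_to (g := fun σ : Equiv.Perm (Fin n) => (σ i, σ k))
        hmaps (fun σ => f (σ i) (σ k)), Finset.mul_sum]
    refine Finset.sum_congr rfl fun p hp => ?_
    rw [Finset.sum_congr rfl (fun σ hσ => ?_), Finset.sum_const, nsmul_eq_mul, hfib p hp]
    simp only [mem_filter] at hσ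
    rw [show σ i = p.1 from congrArg Prod.fst hσ.2, show σ k = p.2 from congrArg Prod.snd hσ.2]
  have hcount : c * (n * n - n) = n.factorial := by
    have := Finset.card_eq_sum_card_fiberwise
      (f := fun σ : Equiv.Perm (Fin n) => (σ i, σ k)) (s := univ)
      (t := (univ : Finset (Fin n)).offDiag) hmaps
    rw [Finset.sum_congr rfl hfib] at this
    simp only [Finset.sum_const, smul_eq_mul, Finset.card_univ, Fintype.card_perm,
      Fintype.card_fin, Finset.offDiag_card] at this
    simpa [Nat.mul_comm] using this.symm
  have hnn : ((n * n - n : ℕ) : ℝ) = (n : ℝ) * n - n := by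
    have : n ≤ n * n := Nat.le_mul_of_pos_left n (by
      rcases Nat.eq_zero_or_pos n with h | h
      · subst h; exact absurd (Fin.pos i) (by simp)
      · exact h)
    push_cast [Nat.cast_sub this]; ring
  rw [hsum, ← hcount, ← hnn]
  push_cast
  ring

/-- If every row sum and every column sum of an `n×n` real matrix `W` is
zero (`n ≥ 2`), then the variance of `σ ↦ ∑ᵢ W_{i,σ(i)}` over a uniformly random
permutation equals `‖W‖_F²/(n−1)`; equivalently, since the mean is zero, the raw second
moment `(1/n!)∑_σ (∑ᵢ W_{i,σ(i)})²` also equals `‖W‖_F²/(n−1)`. -/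
theorem variance_permutation_sum (n : ℕ) (hn : 2 ≤ n) (W : Matrix (Fin n) (Fin n) ℝ)
    (hrow : ∀ i, ∑ j, W i j = 0) (hcol : ∀ j, ∑ i, W i j = 0) :
    ((n.factorial : ℝ)⁻¹ * ∑ σ : Equiv.Perm (Fin n), (∑ i, W i (σ i)) ^ 2)
        - ((n.factorial : ℝ)⁻¹ * ∑ σ : Equiv.Perm (Fin n), ∑ i, W i (σ i)) ^ 2
      = (∑ i, ∑ j, W i j ^ 2) / ((n : ℝ) - 1) ∧
    (n.factorial : ℝ)⁻¹ * ∑ σ : Equiv.Perm (Fin n), (∑ i, W i (σ i)) ^ 2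
      = (∑ i, ∑ j, W i j ^ 2) / ((n : ℝ) - 1) := by
  have hn0 : (n : ℝ) ≠ 0 := by positivity
  have hn1 : (n : ℝ) - 1 ≠ 0 := by
    have : (2 : ℝ) ≤ (n : ℝ) := by exact_mod_cast hn
    linarith
  have hF : (n.factorial : ℝ) ≠ 0 := by positivity
  set S : ℝ := ∑ i, ∑ j, W i j ^ 2 with hS
  -- the mean is zero
  have hmean : ∑ σ : Equiv.Perm (Fin n), ∑ i, W i (σ i) = 0 := by
    rw [Finset.sum_comm]
    refine Finset.sum_eq_zero fun i _ => ?_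
    have h := sum_perm_single i (fun j => W i j)
    rw [hrow i, mul_zero] at h
    exact (mul_eq_zero.mp h).resolve_left hn0
  -- T i k := ∑ over σ of W i (σ i) * W k (σ k)
  set T : Fin n → Fin n → ℝ :=
    fun i k => ∑ σ : Equiv.Perm (Fin n), W i (σ i) * W k (σ k) with hT
  -- the diagonal part
  have hdiag : (n : ℝ) * ∑ i, T i i = (n.factorial : ℝ) * S := by
    rw [Finset.mul_sum, hS, Finset.mul_sum]
    refine Finset.sum_congr rfl fun i _ => ?_
    have h := sum_perm_single i (fun j => W i j * W i j)
    simpa [sq] using h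
  -- the off-diagonal part
  have hoff : ((n : ℝ) * n - n) * ∑ p ∈ (univ : Finset (Fin n)).offDiag, T p.1 p.2
      = (n.factorial : ℝ) * S := by
    rw [Finset.mul_sum]
    have step : ∀ p ∈ (univ : Finset (Fin n)).offDiag,
        ((n : ℝ) * n - n) * T p.1 p.2
          = (n.factorial : ℝ) * (- ∑ j, W p.1 j * W p.2 j) := by
      intro p hp
      have hpne : p.1 ≠ p.2 := (Finset.mem_offDiag.mp hp).2.2
      have h := sum_perm_pair hpne (fun j l => W p.1 j * W p.2 l)
      rw [h]
      congr 1
      have hsplit : ∑ q ∈ ((univ : Finset (Fin n)) ×ˢ univ), W p.1 q.1 * W p.2 q.2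
          = ∑ q ∈ (univ : Finset (Fin n)).diag, W p.1 q.1 * W p.2 q.2
            + ∑ q ∈ (univ : Finset (Fin n)).offDiag, W p.1 q.1 * W p.2 q.2 := by
        rw [← Finset.sum_union (Finset.disjoint_diag_offDiag _), Finset.diag_union_offDiag]
      have hfull : ∑ q ∈ ((univ : Finset (Fin n)) ×ˢ univ), W p.1 q.1 * W p.2 q.2 = 0 := by
        rw [Finset.sum_product]
        dsimp only
        refine Finset.sum_eq_zero fun j _ => ?_
        rw [← Finset.mul_sum, hrow p.2, mul_zero]
      have hdiagq : ∑ q ∈ (univ : Finset (Fin n)).diag, W p.1 q.1 * W p.2 q.2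
          = ∑ j, W p.1 j * W p.2 j := Finset.sum_diag _ _
      rw [hsplit, hdiagq] at hfull
      linarith
    rw [Finset.sum_congr rfl step, ← Finset.mul_sum]
    congr 1
    -- ∑ offDiag of -(D p.1 p.2) = S
    have hsplit : ∑ p ∈ ((univ : Finset (Fin n)) ×ˢ univ), ∑ j, W p.1 j * W p.2 j
        = ∑ p ∈ (univ : Finset (Fin n)).diag, ∑ j, W p.1 j * W p.2 j
          + ∑ p ∈ (univ : Finset (Fin n)).offDiag, ∑ j, W p.1 j * W p.2 j := by
      rw [← Finset.sum_union (Finset.disjoint_diag_offDiag _), Finset.diag_union_offDiag]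
    have hfull : ∑ p ∈ ((univ : Finset (Fin n)) ×ˢ univ), ∑ j, W p.1 j * W p.2 j = 0 := by
      rw [Finset.sum_product]
      dsimp only
      refine Finset.sum_eq_zero fun i _ => ?_
      rw [Finset.sum_comm]
      refine Finset.sum_eq_zero fun j _ => ?_
      rw [← Finset.mul_sum, hcol j, mul_zero]
    have hdiagp : ∑ p ∈ (univ : Finset (Fin n)).diag, ∑ j, W p.1 j * W p.2 j = S := by
      rw [Finset.sum_diag, hS]
      exact Finset.sum_congr rfl fun i _ => Finset.sum_congr rfl fun j _ => by rw [pow_two]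
    rw [hsplit, hdiagp] at hfull
    rw [Finset.sum_neg_distrib]
    linarith
  -- second moment
  have hsq : ∑ σ : Equiv.Perm (Fin n), (∑ i, W i (σ i)) ^ 2
      = ∑ i, T i i + ∑ p ∈ (univ : Finset (Fin n)).offDiag, T p.1 p.2 := by
    have expand : ∑ σ : Equiv.Perm (Fin n), (∑ i, W i (σ i)) ^ 2
        = ∑ p ∈ ((univ : Finset (Fin n)) ×ˢ univ), T p.1 p.2 := by
      simp_rw [sq, Finset.sum_mul_sum, hT]
      rw [Finset.sum_product]
      dsimp only
      rw [Finset.sum_comm]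
      refine Finset.sum_congr rfl fun i _ => Finset.sum_comm
    rw [expand, ← Finset.diag_union_offDiag (univ : Finset (Fin n)),
      Finset.sum_union (Finset.disjoint_diag_offDiag _), Finset.sum_diag]
  have key : ((n : ℝ) - 1) * ∑ σ : Equiv.Perm (Fin n), (∑ i, W i (σ i)) ^ 2
      = (n.factorial : ℝ) * S := by
    rw [hsq]
    set X := ∑ i, T i i
    set Y := ∑ p ∈ (univ : Finset (Fin n)).offDiag, T p.1 p.2
    have h1 : (n : ℝ) * X = (n.factorial : ℝ) * S := hdiag
    have h2 : ((n : ℝ) * n - n) * Y = (n.factorial : ℝ) * S := hoff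
    have goal_n : (n : ℝ) * (((n : ℝ) - 1) * (X + Y)) = (n : ℝ) * ((n.factorial : ℝ) * S) := by
      nlinarith [h1, h2]
    exact mul_left_cancel₀ hn0 goal_n
  have hsecond : (n.factorial : ℝ)⁻¹ * ∑ σ : Equiv.Perm (Fin n), (∑ i, W i (σ i)) ^ 2
      = S / ((n : ℝ) - 1) := by
    field_simp
    linarith [key]
  exact ⟨by rw [hmean, mul_zero]; simpa using hsecond, hsecond⟩
end

section
/- Let n ≥ 3 and let W be a real n×n matrix with zero diagonal (W_{ii} = 0 for all i) such that every row sum and every column sum of W is zero. Then the variance of σ ↦ ∑_{i=1}^n W_{i,σ(i)} over a uniformly random n-cycle σ of {1,…,n} is at least ‖W‖_F²/((n−1)(n−2)). -/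
/-!
Write `T σ = ∑ i, W i (σ i)`. Conjugation permutes the `n`-cycles, so the number of `n`-cycles
with `σ i = j` is `(n-2)!` whenever `i ≠ j`, and the number with `σ i = j`, `σ k = l` (where
`i ≠ k`, `i ≠ j`, `k ≠ l`) is `(n-3)!`, except that it vanishes when `l = j` (injectivity) or
`(k, l) = (j, i)` (a `2`-cycle). Summing against `W`, the zero diagonal and the zero row and
column sums give `∑ σ, T σ = 0` and
`∑ σ, T σ ^ 2 = (n-2)! ‖W‖² + (n-3)! (‖W‖² - ∑ i j, W i j * W j i)`. The last bracket is
nonnegative, so the variance is at least `‖W‖² / (n-1)`.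
-/

open Finset
open scoped Classical

theorem Finset.sum_eq_card_mul_of_subset {ι : Type*} {s t : Finset ι} (hst : s ⊆ t)
    {f : ι → ℕ} {a : ℕ} (hzero : ∀ x ∈ t, x ∉ s → f x = 0) (hconst : ∀ x ∈ s, f x = a) :
    ∑ x ∈ t, f x = #s * a := by
  rw [← sum_subset hst hzero, sum_const_nat hconst]

theorem Finset.sum_comp_eq_sum_card_filter_mul {ι κ R : Type*} [Fintype κ] [DecidableEq κ]
    [NonAssocSemiring R] (s : Finset ι) (g : ι → κ) (f : κ → R) :
    ∑ i ∈ s, f (g i) = ∑ c, (#{i ∈ s | g i = c} : R) * f c := by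
  rw [← sum_fiberwise_of_maps_to' fun i _ => mem_univ (g i)]
  simp only [sum_const, nsmul_eq_mul]

theorem Finset.sum_sum_mul_swap_le_sum_sum_sq {ι : Type*} (s : Finset ι) (W : ι → ι → ℝ) :
    ∑ i ∈ s, ∑ j ∈ s, W i j * W j i ≤ ∑ i ∈ s, ∑ j ∈ s, W i j ^ 2 := by
  have h : ∑ i ∈ s, ∑ j ∈ s, 2 * W i j * W j i ≤
      ∑ i ∈ s, ∑ j ∈ s, W i j ^ 2 + ∑ i ∈ s, ∑ j ∈ s, W j i ^ 2 := by
    rw [← sum_add_distrib]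
    gcongr with i _
    rw [← sum_add_distrib]
    exact sum_le_sum fun j _ => two_mul_le_add_sq (W i j) (W j i)
  have hswap : ∑ i ∈ s, ∑ j ∈ s, W j i ^ 2 = ∑ i ∈ s, ∑ j ∈ s, W i j ^ 2 := sum_comm
  simp only [hswap, mul_assoc, ← mul_sum] at h
  linarith

namespace Equiv.Perm

open Fintype

variable {α : Type*} [Fintype α] [DecidableEq α]

variable (α) in
/-- The `card α`-cycles, described by their cycle type so that membership is decidable. -/
def fullCycles : Finset (Perm α) :=
  {σ | σ.cycleType = {card α}}

theorem mem_fullCycles {σ : Perm α} : σ ∈ fullCycles α ↔ σ.IsCycle ∧ σ.support = univ := by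
  rw [fullCycles, mem_filter, and_iff_right (mem_univ σ)]
  constructor
  · intro h
    have hσ : σ.IsCycle := card_cycleType_eq_one.mp (by rw [h, Multiset.card_singleton])
    rw [hσ.cycleType, Multiset.singleton_inj] at h
    exact ⟨hσ, eq_univ_of_card _ h⟩
  · rintro ⟨hσ, hsupp⟩
    rw [hσ.cycleType, hsupp, card_univ]

theorem card_fullCycles (h : 2 ≤ card α) : #(fullCycles α) = (card α - 1).factorial := by
  rw [fullCycles, card_of_cycleType_singleton h le_rfl, Nat.choose_self, mul_one]

theorem conj_mem_fullCycles {σ : Perm α} (hσ : σ ∈ fullCycles α) (π : Perm α) :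
    π * σ * π⁻¹ ∈ fullCycles α := by
  simpa [fullCycles, cycleType_conj] using hσ

theorem inv_mem_fullCycles {σ : Perm α} (hσ : σ ∈ fullCycles α) : σ⁻¹ ∈ fullCycles α := by
  simpa [fullCycles, cycleType_inv] using hσ

theorem apply_ne_self_of_mem_fullCycles {σ : Perm α} (hσ : σ ∈ fullCycles α) (x : α) :
    σ x ≠ x :=
  mem_support.mp ((mem_fullCycles.mp hσ).2 ▸ mem_univ x)

theorem apply_apply_ne_self_of_mem_fullCycles (h : 3 ≤ card α) {σ : Perm α}
    (hσ : σ ∈ fullCycles α) (x : α) : σ (σ x) ≠ x := by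
  intro hx
  obtain ⟨hcyc, hsupp⟩ := mem_fullCycles.mp hσ
  have hswap := hcyc.eq_swap_of_apply_apply_eq_self (apply_ne_self_of_mem_fullCycles hσ x) hx
  have := card_support_swap (apply_ne_self_of_mem_fullCycles hσ x).symm
  rw [← hswap, hsupp, card_univ] at this
  omega

end Equiv.Perm

namespace Equiv.Perm.fullCycles

open Fintype Nat

section Counting

variable {α : Type*} [Fintype α] [DecidableEq α]

def arcCount (i j : α) : ℕ := #{σ ∈ fullCycles α | σ i = j}

def arcPairCount (i j k l : α) : ℕ := #{σ ∈ fullCycles α | σ i = j ∧ σ k = l}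

theorem arcPairCount_self (i j : α) : arcPairCount i j i j = arcCount i j := by
  simp only [arcPairCount, arcCount, and_self]

theorem arcPairCount_conj (π : Perm α) (i j k l : α) :
    arcPairCount (π i) (π j) (π k) (π l) = arcPairCount i j k l := by
  refine card_nbij' (fun σ => π⁻¹ * σ * π) (fun σ => π * σ * π⁻¹) ?_ ?_ ?_ ?_
  · intro σ hσ
    simp only [mem_coe, mem_filter, mul_apply] at hσ ⊢
    refine ⟨by simpa using conj_mem_fullCycles hσ.1 π⁻¹, ?_, ?_⟩ <;> simp [hσ.2]
  · intro σ hσ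
    simp only [mem_coe, mem_filter, mul_apply] at hσ ⊢
    exact ⟨conj_mem_fullCycles hσ.1 π, by simp [hσ.2]⟩
  · intro σ _; simp [mul_assoc]
  · intro σ _; simp [mul_assoc]

theorem arcPairCount_comm_inv (i j k l : α) : arcPairCount i j k l = arcPairCount j i l k := by
  refine card_nbij' (·⁻¹) (·⁻¹) ?_ ?_ (fun σ _ => inv_inv σ) (fun σ _ => inv_inv σ) <;>
  · intro σ hσ
    simp only [mem_coe, mem_filter, inv_eq_iff_eq] at hσ ⊢
    exact ⟨inv_mem_fullCycles hσ.1, hσ.2.1.symm, hσ.2.2.symm⟩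

theorem arcPairCount_congr_of_ne {i j k x y : α} (hxi : x ≠ i) (hxj : x ≠ j) (hxk : x ≠ k)
    (hyi : y ≠ i) (hyj : y ≠ j) (hyk : y ≠ k) : arcPairCount i j k x = arcPairCount i j k y := by
  have := arcPairCount_conj (swap x y) i j k x
  rwa [swap_apply_of_ne_of_ne hxi.symm hyi.symm, swap_apply_of_ne_of_ne hxj.symm hyj.symm,
    swap_apply_of_ne_of_ne hxk.symm hyk.symm, swap_apply_left, eq_comm] at this

theorem arcPairCount_eq_zero {i j k l : α} (h : ∀ σ ∈ fullCycles α, σ i = j → σ k ≠ l) :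
    arcPairCount i j k l = 0 :=
  card_eq_zero.mpr (filter_eq_empty_iff.mpr fun σ hσ hσij => h σ hσ hσij.1 hσij.2)

theorem sum_arcCount (i : α) : ∑ j, arcCount i j = #(fullCycles α) :=
  (card_eq_sum_card_fiberwise fun σ _ => mem_univ (σ i)).symm

theorem sum_arcPairCount (i j k : α) : ∑ l, arcPairCount i j k l = arcCount i j := by
  rw [arcCount, card_eq_sum_card_fiberwise fun σ _ => mem_univ (σ k)]
  simp only [arcPairCount, filter_filter]

theorem arcCount_self (i : α) : arcCount i i = 0 := by
  rw [← arcPairCount_self]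
  exact arcPairCount_eq_zero fun σ hσ h => absurd h (apply_ne_self_of_mem_fullCycles hσ i)

theorem arcCount_of_ne {i j : α} (hij : i ≠ j) : arcCount i j = (card α - 2)! := by
  have hcard : #(univ.erase i) = card α - 1 := by
    rw [card_erase_of_mem (mem_univ i), Finset.card_univ]
  have hpos : 0 < card α - 1 := hcard ▸ card_pos.mpr ⟨j, mem_erase.mpr ⟨hij.symm, mem_univ j⟩⟩
  have hsum : ∑ x, arcCount i x = #(univ.erase i) * arcCount i j := by
    refine sum_eq_card_mul_of_subset (subset_univ _) (fun x _ hx => ?_) fun x hx => ?_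
    · obtain rfl : x = i := by simpa using hx
      exact arcCount_self x
    · have hxi := (mem_erase.mp hx).1
      have := arcPairCount_conj (swap x j) i x i x
      rw [swap_apply_of_ne_of_ne hxi.symm hij, swap_apply_left, arcPairCount_self,
        arcPairCount_self] at this
      exact this.symm
  rw [sum_arcCount, card_fullCycles (by omega), hcard, ← mul_factorial_pred hpos.ne',
    Nat.sub_sub] at hsum
  exact (Nat.eq_of_mul_eq_mul_left hpos hsum).symm

theorem arcPairCount_path {i j l : α} (hij : i ≠ j) (hli : l ≠ i) (hlj : l ≠ j) :
    arcPairCount i j j l = (card α - 3)! := by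
  set s : Finset α := univ \ {i, j}
  have hmem : ∀ {x}, x ∈ s ↔ x ≠ i ∧ x ≠ j := by simp [s]
  have hcard : #s = card α - 2 := by rw [card_univ_sdiff, card_pair hij]
  have hpos : 0 < card α - 2 := hcard ▸ card_pos.mpr ⟨l, hmem.mpr ⟨hli, hlj⟩⟩
  have hsum : ∑ x, arcPairCount i j j x = #s * arcPairCount i j j l := by
    refine sum_eq_card_mul_of_subset (subset_univ _) (fun x _ hx => ?_) fun x hx => ?_
    · obtain rfl | rfl : x = i ∨ x = j := by simpa [s, or_iff_not_imp_left] using hx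
      · exact arcPairCount_eq_zero fun σ hσ h => by
          rw [← h]; exact apply_apply_ne_self_of_mem_fullCycles (by omega) hσ x
      · exact arcPairCount_eq_zero fun σ hσ _ => apply_ne_self_of_mem_fullCycles hσ x
    · obtain ⟨hxi, hxj⟩ := hmem.mp hx
      exact arcPairCount_congr_of_ne hxi hxj hxj hli hlj hlj
  rw [sum_arcPairCount, arcCount_of_ne hij, hcard, ← mul_factorial_pred hpos.ne',
    Nat.sub_sub] at hsum
  exact (Nat.eq_of_mul_eq_mul_left hpos hsum).symm

theorem arcPairCount_of_pairwise_ne {i j k l : α} (hij : i ≠ j) (hik : i ≠ k) (hil : i ≠ l)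
    (hjk : j ≠ k) (hjl : j ≠ l) (hkl : k ≠ l) : arcPairCount i j k l = (card α - 3)! := by
  set s : Finset α := univ \ {i, j, k}
  have hmem : ∀ {x}, x ∈ s ↔ x ≠ i ∧ x ≠ j ∧ x ≠ k := by simp [s]
  have hcard : #s = card α - 3 := by
    rw [card_univ_sdiff, card_insert_of_notMem (by simp [hij, hik]), card_pair hjk]
  have hpos : 0 < card α - 3 :=
    hcard ▸ card_pos.mpr ⟨l, hmem.mpr ⟨hil.symm, hjl.symm, hkl.symm⟩⟩
  have hsum : ∑ x, arcPairCount i j k x = arcPairCount i j k i + #s * arcPairCount i j k l := by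
    rw [← add_sum_erase _ _ (mem_univ i)]
    congr 1
    refine sum_eq_card_mul_of_subset (fun x hx => ?_) (fun x hx hxs => ?_) fun x hx => ?_
    · exact mem_erase.mpr ⟨(hmem.mp hx).1, mem_univ x⟩
    · obtain rfl | rfl : x = j ∨ x = k := by
        simpa [s, (mem_erase.mp hx).1, or_iff_not_imp_left] using hxs
      · exact arcPairCount_eq_zero fun σ _ hσi hσk => hik (σ.injective (hσi.trans hσk.symm))
      · exact arcPairCount_eq_zero fun σ hσ _ => apply_ne_self_of_mem_fullCycles hσ x
    · obtain ⟨hxi, hxj, hxk⟩ := hmem.mp hx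
      exact arcPairCount_congr_of_ne hxi hxj hxk hil.symm hjl.symm hkl.symm
  have hback : arcPairCount i j k i = (card α - 3)! := by
    rw [arcPairCount_comm_inv]; exact arcPairCount_path hij.symm hjk.symm hik.symm
  obtain ⟨m, hm⟩ : ∃ m, card α = m + 3 := ⟨card α - 3, by omega⟩
  rw [sum_arcPairCount, arcCount_of_ne hij, hback, hcard, hm, show m + 3 - 2 = m + 1 by omega,
    Nat.add_sub_cancel, factorial_succ] at hsum
  rw [hm, Nat.add_sub_cancel] at hpos ⊢
  exact Nat.eq_of_mul_eq_mul_left hpos (by linarith)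

theorem arcPairCount_of_ne {R : Type*} [Ring R] (h3 : 3 ≤ card α) {i j k l : α} (hik : i ≠ k)
    (hij : i ≠ j) (hkl : k ≠ l) :
    (arcPairCount i j k l : R) =
      (card α - 3)! * (1 - (if l = j then 1 else 0) - (if k = j ∧ l = i then 1 else 0)) := by
  rcases eq_or_ne l j with rfl | hlj
  · rw [arcPairCount_eq_zero fun σ _ hσi hσk => hik (σ.injective (hσi.trans hσk.symm))]
    simp [hij.symm]
  by_cases hback : k = j ∧ l = i
  · obtain ⟨rfl, rfl⟩ := hback
    rw [arcPairCount_eq_zero fun σ hσ hσi => by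
      rw [← hσi]; exact apply_apply_ne_self_of_mem_fullCycles h3 hσ l]
    simp [hkl.symm]
  rw [if_neg hlj, if_neg hback, sub_zero, sub_zero, mul_one]
  rcases eq_or_ne k j with rfl | hkj
  · rw [arcPairCount_path hij (fun h => hback ⟨rfl, h⟩) hkl.symm]
  rcases eq_or_ne l i with rfl | hli
  · rw [arcPairCount_comm_inv, arcPairCount_path hij.symm hkj hik.symm]
  rw [arcPairCount_of_pairwise_ne hij hik hli.symm hkj.symm hlj.symm hkl]

end Counting

section Moments

variable {α R : Type*} [Fintype α] [DecidableEq α] [CommRing R] (W : α → α → R)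

theorem sum_sum_apply_eq_sum_arcCount :
    ∑ σ ∈ fullCycles α, ∑ i, W i (σ i) = ∑ i, ∑ j, (arcCount i j : R) * W i j := by
  rw [sum_comm]
  exact sum_congr rfl fun i _ => sum_comp_eq_sum_card_filter_mul _ (fun σ : Perm α => σ i) (W i)

theorem sum_sq_sum_apply_eq_sum_arcPairCount :
    ∑ σ ∈ fullCycles α, (∑ i, W i (σ i)) ^ 2 =
      ∑ i, ∑ k, ∑ j, ∑ l, (arcPairCount i j k l : R) * (W i j * W k l) := by
  simp_rw [sq, Fintype.sum_mul_sum]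
  rw [sum_comm]
  refine sum_congr rfl fun i _ => ?_
  rw [sum_comm]
  refine sum_congr rfl fun k _ => ?_
  rw [sum_comp_eq_sum_card_filter_mul _ (fun σ : Perm α => (σ i, σ k))
    fun p => W i p.1 * W k p.2, Fintype.sum_prod_type]
  simp only [arcPairCount, Prod.mk.injEq]

theorem sum_sum_apply_eq_zero (hdiag : ∀ i, W i i = 0) (hrow : ∀ i, ∑ j, W i j = 0) :
    ∑ σ ∈ fullCycles α, ∑ i, W i (σ i) = 0 := by
  rw [sum_sum_apply_eq_sum_arcCount]
  refine sum_eq_zero fun i _ => ?_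
  calc ∑ j, (arcCount i j : R) * W i j = ∑ j, ((card α - 2)! : R) * W i j := by
        refine sum_congr rfl fun j _ => ?_
        rcases eq_or_ne i j with rfl | hij
        · rw [hdiag, mul_zero, mul_zero]
        · rw [arcCount_of_ne hij]
    _ = 0 := by rw [← mul_sum, hrow, mul_zero]

theorem sum_arcPairCount_mul_self (hdiag : ∀ i, W i i = 0) (i : α) :
    ∑ j, ∑ l, (arcPairCount i j i l : R) * (W i j * W i l) = (card α - 2)! * ∑ j, W i j ^ 2 := by
  rw [mul_sum]
  refine sum_congr rfl fun j _ => ?_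
  rw [Fintype.sum_eq_single j fun l hlj => ?_, arcPairCount_self, sq]
  · rcases eq_or_ne i j with rfl | hij
    · rw [hdiag]; ring
    · rw [arcCount_of_ne hij]
  · rw [arcPairCount_eq_zero fun σ _ hσj hσl => hlj (hσl.symm.trans hσj), Nat.cast_zero, zero_mul]

theorem sum_arcPairCount_mul_of_ne (h3 : 3 ≤ card α) (hdiag : ∀ i, W i i = 0)
    (hrow : ∀ i, ∑ j, W i j = 0) {i k : α} (hik : i ≠ k) :
    ∑ j, ∑ l, (arcPairCount i j k l : R) * (W i j * W k l) =
      -(card α - 3)! * (∑ j, W i j * W k j + W i k * W k i) := by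
  have hterm : ∀ j l, (arcPairCount i j k l : R) * (W i j * W k l) =
      (card α - 3)! * ((1 - (if l = j then 1 else 0) - (if k = j ∧ l = i then 1 else 0)) *
        (W i j * W k l)) := by
    intro j l
    rcases eq_or_ne i j with rfl | hij
    · simp [hdiag]
    rcases eq_or_ne k l with rfl | hkl
    · simp [hdiag]
    rw [arcPairCount_of_ne h3 hik hij hkl, mul_assoc]
  simp_rw [hterm, ← mul_sum, sub_mul, one_mul, sum_sub_distrib, ite_mul, ite_and]
  simp only [one_mul, zero_mul, sum_ite_irrel, sum_const_zero, Fintype.sum_ite_eq',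
    Fintype.sum_ite_eq, ← mul_sum, hrow, mul_zero]
  ring

theorem sum_sq_sum_apply_eq (h3 : 3 ≤ card α) (hdiag : ∀ i, W i i = 0)
    (hrow : ∀ i, ∑ j, W i j = 0) (hcol : ∀ j, ∑ i, W i j = 0) :
    ∑ σ ∈ fullCycles α, (∑ i, W i (σ i)) ^ 2 =
      (card α - 2)! * ∑ i, ∑ j, W i j ^ 2 +
        (card α - 3)! * (∑ i, ∑ j, W i j ^ 2 - ∑ i, ∑ j, W i j * W j i) := by
  have hrowBlock : ∀ i, ∑ k, ∑ j, ∑ l, (arcPairCount i j k l : R) * (W i j * W k l) =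
      (card α - 2)! * ∑ j, W i j ^ 2 + (card α - 3)! * ∑ j, W i j ^ 2 -
        (card α - 3)! * ∑ k, (∑ j, W i j * W k j + W i k * W k i) := by
    intro i
    rw [← add_sum_erase _ _ (mem_univ i), sum_arcPairCount_mul_self W hdiag,
      sum_congr rfl fun k hk =>
        sum_arcPairCount_mul_of_ne W h3 hdiag hrow (mem_erase.mp hk).1.symm,
      ← mul_sum, sum_erase_eq_sub (mem_univ i)]
    simp only [hdiag, mul_zero, add_zero, sq]
    ring
  have hcross : ∑ i, ∑ k, ∑ j, W i j * W k j = 0 := by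
    refine sum_eq_zero fun i _ => ?_
    rw [sum_comm]
    simp only [← mul_sum, hcol, mul_zero, sum_const_zero]
  rw [sum_sq_sum_apply_eq_sum_arcPairCount, sum_congr rfl fun i _ => hrowBlock i]
  simp only [sum_sub_distrib, sum_add_distrib, ← mul_sum, hcross]
  ring

end Moments

end Equiv.Perm.fullCycles

open Equiv Equiv.Perm Equiv.Perm.fullCycles Nat in
/-- For `n ≥ 3` and an `n×n` real matrix `W` with zero diagonal and all row
and column sums zero, the variance of `σ ↦ ∑ᵢ W_{i,σ(i)}` over a uniformly random
`n`-cycle (there are `(n−1)!` of them) is at least `‖W‖_F²/((n−1)(n−2))`. -/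
theorem variance_cyclic_permutation_sum_lower_bound (n : ℕ) (hn : 3 ≤ n)
    (W : Matrix (Fin n) (Fin n) ℝ)
    (hdiag : ∀ i, W i i = 0)
    (hrow : ∀ i, ∑ j, W i j = 0) (hcol : ∀ j, ∑ i, W i j = 0) :
    (((n - 1).factorial : ℝ)⁻¹ *
        ∑ σ ∈ (Finset.univ : Finset (Equiv.Perm (Fin n))).filter
          (fun σ => σ.IsCycle ∧ σ.support = Finset.univ), (∑ i, W i (σ i)) ^ 2)
      - (((n - 1).factorial : ℝ)⁻¹ *
          ∑ σ ∈ (Finset.univ : Finset (Equiv.Perm (Fin n))).filter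
            (fun σ => σ.IsCycle ∧ σ.support = Finset.univ), ∑ i, W i (σ i)) ^ 2
      ≥ (∑ i, ∑ j, W i j ^ 2) / (((n : ℝ) - 1) * ((n : ℝ) - 2)) := by
  have hcycles : ({σ | σ.IsCycle ∧ σ.support = univ} : Finset (Perm (Fin n))) =
      fullCycles (Fin n) := by
    ext σ; rw [mem_fullCycles, mem_filter, and_iff_right (mem_univ σ)]
  have h3 : 3 ≤ Fintype.card (Fin n) := by rwa [Fintype.card_fin]
  rw [hcycles, sum_sum_apply_eq_zero W hdiag hrow, sum_sq_sum_apply_eq W h3 hdiag hrow hcol,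
    Fintype.card_fin, mul_zero, zero_pow two_ne_zero, sub_zero]
  set S := ∑ i, ∑ j, W i j ^ 2
  have hS : 0 ≤ S := by positivity
  have hSP : 0 ≤ ((n - 3)! : ℝ) * (S - ∑ i, ∑ j, W i j * W j i) :=
    mul_nonneg (by positivity) (sub_nonneg.mpr (sum_sum_mul_swap_le_sum_sum_sq univ W))
  have hn1 : (2 : ℝ) ≤ n - 1 := by
    have : (3 : ℝ) ≤ n := by exact_mod_cast hn
    linarith
  have hfact : ((n - 1)! : ℝ) = ((n : ℝ) - 1) * (n - 2)! := by
    rw [← mul_factorial_pred (by omega : n - 1 ≠ 0), Nat.sub_sub, Nat.cast_mul,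
      Nat.cast_sub (by omega)]
    norm_num
  calc S / (((n : ℝ) - 1) * ((n : ℝ) - 2)) ≤ S / ((n : ℝ) - 1) :=
        div_le_div_of_nonneg_left hS (by linarith)
          (le_mul_of_one_le_right (by linarith) (by linarith))
    _ = ((n - 1)! : ℝ)⁻¹ * ((n - 2)! * S) := by rw [hfact]; field_simp
    _ ≤ ((n - 1)! : ℝ)⁻¹ * ((n - 2)! * S + (n - 3)! * (S - ∑ i, ∑ j, W i j * W j i)) := by
        gcongr
        linarith
end

section
/- Let A be a symmetric real n×n matrix with nonnegative entries and zero diagonal, and let s ∈ {−1,1}^n be a strict local maximum cut, meaning that for every i ∈ {1,…,n}, s_i·∑_{j} A_{ij} s_j < 0. Fix ε ∈ (0,1/2) and let p ∈ [ε,1−ε]^n be the vertex p = (1 + (1−2ε)s)/2, i.e., p_i = 1−ε if s_i = 1 and p_i = ε if s_i = −1. Define the product-distribution Max-Cut loss L(p) = ∑_{i,j} A_{ij}(2p_i−1)(2p_j−1). Then for every i ∈ {1,…,n}, the gradient satisfies (∇L(p))_i · s_i < 0; in other words, at p the negative gradient points outward along every coordinate of the box [ε,1−ε]^n, so p is a (highly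 sub-optimal) stationary point of projected gradient descent on [ε,1−ε]^n. -/
/-!
At the vertex `p` we have `2p - 1 = (1 - 2ε) s`, and the gradient of the loss is
`∇L(q) = 2 (A + Aᵀ) (2q - 1)`, which is `4 A (2q - 1)` for symmetric `A`. Hence
`(∇L(p))ᵢ sᵢ = 4 (1 - 2ε) · sᵢ (A s)ᵢ`, which is negative by the local maximality of the cut `s`.
-/

open Finset

lemma EuclideanSpace.gradient_apply {ι : Type*} [Fintype ι] [DecidableEq ι]
    (f : EuclideanSpace ℝ ι → ℝ) (x : EuclideanSpace ℝ ι) (i : ι) :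
    gradient f x i = fderiv ℝ f x (EuclideanSpace.single i 1) := by
  rw [← inner_gradient_left, EuclideanSpace.inner_single_right]
  simp

lemma HasFDerivAt.fun_sum_sum_mul_mul {ι E : Type*} [Fintype ι] [NormedAddCommGroup E]
    [NormedSpace ℝ E] (A : Matrix ι ι ℝ) {f : ι → E → ℝ} {f' : ι → E →L[ℝ] ℝ} {x : E}
    (hf : ∀ i, HasFDerivAt (f i) (f' i) x) :
    HasFDerivAt (fun y => ∑ i, ∑ j, A i j * f i y * f j y)
      (∑ i, ∑ j, A i j • (f i x • f' j + f j x • f' i)) x := by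
  refine HasFDerivAt.fun_sum fun i _ => HasFDerivAt.fun_sum fun j _ => ?_
  simpa only [mul_assoc] using ((hf i).fun_mul (hf j)).const_mul (A i j)

noncomputable def maxCutProductLoss {ι : Type*} [Fintype ι] (A : Matrix ι ι ℝ)
    (q : EuclideanSpace ℝ ι) : ℝ :=
  ∑ i, ∑ j, A i j * (2 * q i - 1) * (2 * q j - 1)

lemma gradient_maxCutProductLoss_apply {ι : Type*} [Fintype ι] [DecidableEq ι]
    (A : Matrix ι ι ℝ) (p : EuclideanSpace ℝ ι) (i : ι) :
    gradient (maxCutProductLoss A) p i = 2 * ∑ j, (A i j + A j i) * (2 * p j - 1) := by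
  have hcoord (a : ι) : HasFDerivAt (fun q : EuclideanSpace ℝ ι => 2 * q a - 1)
      ((2 : ℝ) • EuclideanSpace.proj (𝕜 := ℝ) a) p :=
    ((EuclideanSpace.proj (𝕜 := ℝ) a).hasFDerivAt.const_mul (2 : ℝ)).sub_const 1
  have hL : HasFDerivAt (maxCutProductLoss A) _ p := HasFDerivAt.fun_sum_sum_mul_mul A hcoord
  rw [EuclideanSpace.gradient_apply, hL.fderiv]
  simp only [smul_add, sum_add_distrib, add_apply, _root_.sum_apply, smul_apply, PiLp.proj_apply,
    PiLp.single_apply, smul_eq_mul, mul_ite, mul_one, mul_zero, sum_ite_eq', mem_univ, ↓reduceIte,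
    sum_ite_irrel, sum_const_zero, add_mul, mul_add, mul_sum]
  rw [add_comm]
  congr 1 <;> exact sum_congr rfl fun _ _ => by ring

theorem maxcut_product_bad_stationary_point_general (n : ℕ) (A : Matrix (Fin n) (Fin n) ℝ)
    (hsym : A.IsSymm)
    (s : Fin n → ℝ)
    (hlocal : ∀ i, s i * ∑ j, A i j * s j < 0)
    (ε : ℝ) (hε : ε ∈ Set.Ioo (0 : ℝ) (1 / 2))
    (p : EuclideanSpace ℝ (Fin n)) (hp : ∀ i, p i = (1 + (1 - 2 * ε) * s i) / 2)
    (L : EuclideanSpace ℝ (Fin n) → ℝ)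
    (hL : L = fun q => ∑ i, ∑ j, A i j * (2 * q i - 1) * (2 * q j - 1)) :
    ∀ i, gradient L p i * s i < 0 := by
  intro i
  have hL' : L = maxCutProductLoss A := hL
  have hterm (j : Fin n) : (A i j + A j i) * (2 * p j - 1) = 2 * (1 - 2 * ε) * (A i j * s j) := by
    rw [hsym.apply i j, hp]
    ring
  calc gradient L p i * s i = 4 * (1 - 2 * ε) * (s i * ∑ j, A i j * s j) := by
        rw [hL', gradient_maxCutProductLoss_apply, sum_congr rfl fun j _ => hterm j, ← mul_sum]
        ring
    _ < 0 := mul_neg_of_pos_of_neg (by linarith [hε.2]) (hlocal i)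

/-- Let `A` be a symmetric nonnegative `n×n` matrix with zero diagonal and
let `s ∈ {−1,1}^n` be a strict local maximum cut (`sᵢ·∑ⱼ Aᵢⱼsⱼ < 0` for every `i`). For
`ε ∈ (0,1/2)` and the vertex `p = (1 + (1−2ε)s)/2` of the box `[ε,1−ε]^n`, the
product-distribution Max-Cut loss `L(q) = ∑_{i,j} Aᵢⱼ(2qᵢ−1)(2qⱼ−1)` satisfies
`(∇L(p))ᵢ · sᵢ < 0` for every `i`: the negative gradient points outward along every
coordinate of the box, so `p` is a stationary point of projected gradient descent. -/
theorem maxcut_product_bad_stationary_point (n : ℕ) (A : Matrix (Fin n) (Fin n) ℝ)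
    (hsym : A.IsSymm) (hnn : ∀ i j, 0 ≤ A i j) (hdiag : ∀ i, A i i = 0)
    (s : Fin n → ℝ) (hs : ∀ i, s i = 1 ∨ s i = -1)
    (hlocal : ∀ i, s i * ∑ j, A i j * s j < 0)
    (ε : ℝ) (hε : ε ∈ Set.Ioo (0 : ℝ) (1 / 2))
    (p : EuclideanSpace ℝ (Fin n)) (hp : ∀ i, p i = (1 + (1 - 2 * ε) * s i) / 2)
    (L : EuclideanSpace ℝ (Fin n) → ℝ)
    (hL : L = fun q => ∑ i, ∑ j, A i j * (2 * q i - 1) * (2 * q j - 1)) :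
    ∀ i, gradient L p i * s i < 0 :=
  maxcut_product_bad_stationary_point_general n A hsym s hlocal ε hε p hp L hL
end
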